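/- Fix γ ∈ (0,1] and M ≥ 2. There is a constant C_{γ,M} > 0 such that for all β > 0 and λ > 0, |Σ_{1 ≤ k ≤ √λ/π - M} k(λ - π²k²)^{γ-1} arctan(πk/β) - (λ^γ/π²) ∫₀¹ x(1-x²)^{γ-1} arctan(x√λ/β) dx| ≤ C_{γ,M} λ^{γ/2}. -/

import Mathlib

/-!
Write `s = √λ`, `h = π / s`, `N = ⌊s / π - M⌋` and `f(x) = x (1 - x²)^(γ-1) arctan (x s / β)`.
The `k`-th summand equals `λ^γ / (π s) · f(k h)`, so the sum is `λ^γ / π²` times the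
right-endpoint Riemann sum `h ∑ f(k h)` of `∫₀¹ f`. Since `f` is nonnegative and nondecreasing
on `[0, 1)`, that Riemann sum differs from the integral by at most the tail `∫_{N h}^1 f`, and
`f(x) ≤ (π/2) (1 - x)^(γ-1)` bounds the tail by `(π / 2γ) (1 - N h)^γ`. Finally
`1 - N h ≤ (M + 1) π / s` by the choice of `N`, and `λ^γ s^(-γ) = λ^(γ/2)`.
-/

open Real Set intervalIntegral MeasureTheory

namespace MonotoneOn

variable {f : ℝ → ℝ} {h : ℝ} {n : ℕ}

lemma comp_mul_right {a b : ℝ} (hf : MonotoneOn f (Icc (a * h) (b * h))) (hh : 0 < h) :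
    MonotoneOn (fun u ↦ f (u * h)) (Icc a b) :=
  hf.comp ((monotone_mul_right_of_nonneg hh.le).monotoneOn _) fun _ hu ↦
    ⟨mul_le_mul_of_nonneg_right hu.1 hh.le, mul_le_mul_of_nonneg_right hu.2 hh.le⟩

lemma integral_le_mul_sum_range (hf : MonotoneOn f (Icc 0 (n * h))) (hh : 0 < h) :
    ∫ x in 0..n * h, f x ≤ h * ∑ i ∈ Finset.range n, f ((i + 1) * h) := by
  have := (comp_mul_right (a := 0) (b := 0 + n) (by simpa using hf) hh).integral_le_sum
  simp only [zero_add, integral_comp_mul_right _ hh.ne', zero_mul, smul_eq_mul,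
    Nat.cast_add, Nat.cast_one] at this
  rwa [inv_mul_le_iff₀ hh] at this

lemma mul_sum_range_le_integral (hf : MonotoneOn f (Icc h ((n + 1) * h))) (hh : 0 < h) :
    h * ∑ i ∈ Finset.range n, f ((i + 1) * h) ≤ ∫ x in h..(n + 1) * h, f x := by
  have := (comp_mul_right (a := 1) (b := 1 + n) (by simpa [add_comm] using hf) hh).sum_le_integral
  simp only [integral_comp_mul_right _ hh.ne', one_mul, smul_eq_mul] at this
  rw [← le_inv_mul_iff₀ hh]
  simpa [add_comm] using this

lemma abs_mul_sum_range_sub_integral_le {b : ℝ} (hf : MonotoneOn f (Icc 0 ((n + 1) * h)))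
    (hh : 0 < h) (hnb : (n + 1) * h ≤ b) (hf₀ : ∀ x ∈ Icc 0 b, 0 ≤ f x)
    (hfi : IntervalIntegrable f volume 0 b) :
    |h * ∑ i ∈ Finset.range n, f ((i + 1) * h) - ∫ x in 0..b, f x| ≤ ∫ x in n * h..b, f x := by
  have hnh : (n : ℝ) * h ≤ (n + 1) * h := by nlinarith
  have hf₀' : 0 ≤ᵐ[volume.restrict (Ioc 0 b)] f :=
    (ae_restrict_iff' measurableSet_Ioc).2 (.of_forall fun x hx ↦ hf₀ x (Ioc_subset_Icc_self hx))
  have lower := (hf.mono (Icc_subset_Icc_right hnh)).integral_le_mul_sum_range hh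
  have upper := (hf.mono (Icc_subset_Icc_left hh.le)).mul_sum_range_le_integral hh
  have upper' : ∫ x in h..(n + 1) * h, f x ≤ ∫ x in 0..b, f x :=
    integral_mono_interval hh.le (by nlinarith) hnb hf₀' hfi
  have hnh₀ : 0 ≤ (n : ℝ) * h := by positivity
  have hnh_mem : (n : ℝ) * h ∈ uIcc 0 b := by
    rw [uIcc_of_le (by linarith)]; exact ⟨hnh₀, by linarith⟩
  have split : (∫ x in 0..n * h, f x) + ∫ x in n * h..b, f x = ∫ x in 0..b, f x :=
    integral_add_adjacent_intervals (hfi.mono_set (uIcc_subset_uIcc left_mem_uIcc hnh_mem))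
      (hfi.mono_set (uIcc_subset_uIcc hnh_mem right_mem_uIcc))
  have tail_nonneg : 0 ≤ ∫ x in n * h..b, f x :=
    intervalIntegral.integral_nonneg (by linarith) fun x hx ↦ hf₀ x ⟨hnh₀.trans hx.1, hx.2⟩
  exact abs_le.2 ⟨by linarith, by linarith⟩

end MonotoneOn

noncomputable def arctanIntegrand (γ c x : ℝ) : ℝ := x * (1 - x ^ 2) ^ (γ - 1) * arctan (x * c)

section ArctanIntegrand

variable {γ c x a : ℝ}

lemma arctanIntegrand_nonneg (hc : 0 ≤ c) (hx : x ∈ Icc 0 1) : 0 ≤ arctanIntegrand γ c x :=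
  mul_nonneg (mul_nonneg hx.1 (rpow_nonneg (sub_nonneg.2 (pow_le_one₀ hx.1 hx.2)) _))
    (arctan_nonneg.2 (mul_nonneg hx.1 hc))

-- Only on `Ico 0 1`: for `γ < 1` the convention `0 ^ (γ - 1) = 0` makes it vanish at `1`.
lemma monotoneOn_arctanIntegrand (hγ : γ ≤ 1) (hc : 0 ≤ c) :
    MonotoneOn (arctanIntegrand γ c) (Ico 0 1) := by
  have hweight : MonotoneOn (fun x : ℝ ↦ (1 - x ^ 2) ^ (γ - 1)) (Ico 0 1) :=
    fun x hx y hy hxy ↦ rpow_le_rpow_of_nonpos (sub_pos.2 (pow_lt_one₀ hy.1 hy.2 two_ne_zero))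
      (by nlinarith [hx.1]) (by linarith)
  have hweight₀ : ∀ x ∈ Ico (0 : ℝ) 1, 0 ≤ (1 - x ^ 2) ^ (γ - 1) := fun x hx ↦
    rpow_nonneg (sub_nonneg.2 (pow_le_one₀ hx.1 hx.2.le)) _
  have harctan : MonotoneOn (fun x ↦ arctan (x * c)) (Ico 0 1) := fun x _ y _ hxy ↦
    arctan_strictMono.monotone (mul_le_mul_of_nonneg_right hxy hc)
  exact (monotoneOn_id.mul hweight (fun x hx ↦ hx.1) hweight₀).mul harctan
    (fun x hx ↦ mul_nonneg hx.1 (hweight₀ x hx)) fun x hx ↦ arctan_nonneg.2 (mul_nonneg hx.1 hc)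

lemma abs_arctanIntegrand_le (hγ : γ ≤ 1) (hx : x ∈ Icc 0 1) :
    |arctanIntegrand γ c x| ≤ π / 2 * (1 - x) ^ (γ - 1) := by
  have hfactor : (1 - x ^ 2) ^ (γ - 1) = (1 - x) ^ (γ - 1) * (1 + x) ^ (γ - 1) := by
    rw [← mul_rpow (by linarith [hx.2]) (by linarith [hx.1])]; ring_nf
  have h1x : (1 + x) ^ (γ - 1) ≤ 1 :=
    rpow_le_one_of_one_le_of_nonpos (by linarith [hx.1]) (by linarith)
  have h1x₀ : 0 ≤ (1 + x) ^ (γ - 1) := rpow_nonneg (by linarith [hx.1]) _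
  have h1x₀' : 0 ≤ (1 - x) ^ (γ - 1) := rpow_nonneg (by linarith [hx.2]) _
  rw [arctanIntegrand, abs_mul, hfactor, abs_of_nonneg (mul_nonneg hx.1 (by positivity))]
  calc x * ((1 - x) ^ (γ - 1) * (1 + x) ^ (γ - 1)) * |arctan (x * c)|
      ≤ 1 * ((1 - x) ^ (γ - 1) * 1) * (π / 2) := by
        gcongr
        · exact hx.2
        · exact (abs_lt.2 ⟨neg_pi_div_two_lt_arctan _, arctan_lt_pi_div_two _⟩).le
    _ = π / 2 * (1 - x) ^ (γ - 1) := by ring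

lemma intervalIntegrable_one_sub_rpow (hγ : 0 < γ) (a b : ℝ) :
    IntervalIntegrable (fun x ↦ (1 - x) ^ (γ - 1)) volume a b := by
  simpa using (intervalIntegrable_rpow' (r := γ - 1) (a := 1 - a) (b := 1 - b)
    (by linarith)).comp_sub_left 1

lemma integral_one_sub_rpow (hγ : 0 < γ) (a : ℝ) :
    ∫ x in a..1, (1 - x) ^ (γ - 1) = (1 - a) ^ γ / γ := by
  rw [integral_comp_sub_left (fun x ↦ x ^ (γ - 1)), sub_self, integral_rpow (.inl (by linarith)),
    sub_add_cancel, zero_rpow hγ.ne', sub_zero]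

lemma intervalIntegrable_arctanIntegrand (hγ : γ ∈ Ioc 0 1) :
    IntervalIntegrable (arctanIntegrand γ c) volume 0 1 := by
  refine (intervalIntegrable_one_sub_rpow hγ.1 0 1).const_mul (π / 2) |>.mono_fun'
    (by unfold arctanIntegrand; fun_prop) ?_
  rw [uIoc_of_le zero_le_one]
  filter_upwards [ae_restrict_mem measurableSet_Ioc] with x hx
  exact abs_arctanIntegrand_le hγ.2 (Ioc_subset_Icc_self hx)

lemma integral_arctanIntegrand_le (hγ : γ ∈ Ioc 0 1) (ha : a ∈ Icc 0 1) :
    ∫ x in a..1, arctanIntegrand γ c x ≤ π / (2 * γ) * (1 - a) ^ γ := by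
  calc ∫ x in a..1, arctanIntegrand γ c x ≤ ∫ x in a..1, π / 2 * (1 - x) ^ (γ - 1) := by
        refine integral_mono_on ha.2 ((intervalIntegrable_arctanIntegrand hγ).mono_set ?_)
          ((intervalIntegrable_one_sub_rpow hγ.1 a 1).const_mul _) fun x hx ↦
          (le_abs_self _).trans (abs_arctanIntegrand_le hγ.2 ⟨ha.1.trans hx.1, hx.2⟩)
        exact uIcc_subset_uIcc (by rwa [uIcc_of_le zero_le_one]) right_mem_uIcc
    _ = π / (2 * γ) * (1 - a) ^ γ := by
        rw [intervalIntegral.integral_const_mul, integral_one_sub_rpow hγ.1]; ring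

lemma abs_mul_sum_range_arctanIntegrand_sub_integral_le (hγ : γ ∈ Ioc 0 1) (hc : 0 ≤ c)
    {h : ℝ} (hh : 0 < h) {n : ℕ} (hn : 0 < n → (n + 1) * h < 1) :
    |h * ∑ i ∈ Finset.range n, arctanIntegrand γ c ((i + 1) * h)
        - ∫ x in (0 : ℝ)..1, arctanIntegrand γ c x|
      ≤ π / (2 * γ) * (1 - n * h) ^ γ := by
  have hnh : (n : ℝ) * h ≤ 1 := by
    rcases n.eq_zero_or_pos with rfl | hn₀
    · simp
    · nlinarith [hn hn₀]
  refine le_trans ?_ (integral_arctanIntegrand_le (c := c) hγ ⟨by positivity, hnh⟩)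
  rcases n.eq_zero_or_pos with rfl | hn₀
  · simp [abs_of_nonneg (intervalIntegral.integral_nonneg zero_le_one
      fun x hx ↦ arctanIntegrand_nonneg hc hx)]
  · exact ((monotoneOn_arctanIntegrand hγ.2 hc).mono (Icc_subset_Ico_right (hn hn₀))
      ).abs_mul_sum_range_sub_integral_le hh (hn hn₀).le (fun x hx ↦ arctanIntegrand_nonneg hc hx)
      (intervalIntegrable_arctanIntegrand hγ)

end ArctanIntegrand

lemma mul_rpow_mul_arctan_eq_arctanIntegrand {γ β s k : ℝ} (hs : 0 < s) (hk : 0 ≤ k)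
    (hks : π * k ≤ s) :
    k * (s ^ 2 - π ^ 2 * k ^ 2) ^ (γ - 1) * arctan (π * k / β)
      = (s ^ 2) ^ γ / (π * s) * arctanIntegrand γ (s / β) (k * (π / s)) := by
  have hbase : 1 - (k * (π / s)) ^ 2 = (s ^ 2 - π ^ 2 * k ^ 2) / s ^ 2 := by field_simp
  have hpow : ((s ^ 2 - π ^ 2 * k ^ 2) / s ^ 2) ^ (γ - 1)
      = (s ^ 2 - π ^ 2 * k ^ 2) ^ (γ - 1) * s ^ 2 / (s ^ 2) ^ γ := by
    have hk2 : 0 ≤ s ^ 2 - π ^ 2 * k ^ 2 := by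
      nlinarith [pow_le_pow_left₀ (by positivity) hks 2]
    rw [div_rpow hk2 (sq_nonneg s), rpow_sub (pow_pos hs 2) γ, rpow_one]
    field_simp
  rw [arctanIntegrand, hbase, hpow, show k * (π / s) * (s / β) = π * k / β by field_simp]
  field_simp

lemma sum_sub_integral_eq_mul_riemannSum_sub_integral {γ β s : ℝ} {N : ℕ} (hs : 0 < s)
    (hN : (N : ℝ) ≤ s / π) :
    ∑ k ∈ Finset.Icc 1 N, (k : ℝ) * (s ^ 2 - π ^ 2 * (k : ℝ) ^ 2) ^ (γ - 1) * arctan (π * k / β)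
        - (s ^ 2) ^ γ / π ^ 2
          * ∫ x in (0 : ℝ)..1, x * (1 - x ^ 2) ^ (γ - 1) * arctan (x * s / β)
      = (s ^ 2) ^ γ / π ^ 2
          * (π / s * ∑ i ∈ Finset.range N, arctanIntegrand γ (s / β) ((i + 1) * (π / s))
            - ∫ x in (0 : ℝ)..1, arctanIntegrand γ (s / β) x) := by
  have hsum : ∑ k ∈ Finset.Icc 1 N,
        (k : ℝ) * (s ^ 2 - π ^ 2 * (k : ℝ) ^ 2) ^ (γ - 1) * arctan (π * k / β)
      = (s ^ 2) ^ γ / (π * s)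
        * ∑ i ∈ Finset.range N, arctanIntegrand γ (s / β) ((i + 1) * (π / s)) := by
    rw [← Finset.Ico_add_one_right_eq_Icc, ← zero_add 1, ← Finset.sum_Ico_add',
      ← Finset.range_eq_Ico, Finset.mul_sum]
    refine Finset.sum_congr rfl fun i hi ↦ ?_
    have hiN : (i : ℝ) + 1 ≤ N := by exact_mod_cast Finset.mem_range.1 hi
    push_cast
    exact mul_rpow_mul_arctan_eq_arctanIntegrand hs (by positivity)
      ((le_div_iff₀' pi_pos).1 (hiN.trans hN))
  have hint : ∫ x in (0 : ℝ)..1, x * (1 - x ^ 2) ^ (γ - 1) * arctan (x * s / β)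
      = ∫ x in (0 : ℝ)..1, arctanIntegrand γ (s / β) x := by
    simp only [arctanIntegrand, mul_div_assoc]
  rw [hsum, hint]
  field_simp

section Floor

variable {s p M : ℝ}

lemma floor_sub_le_div (hs : 0 < s) (hp : 0 < p) (hM : 0 ≤ M) : (⌊s / p - M⌋₊ : ℝ) ≤ s / p :=
  (Nat.cast_le.2 (Nat.floor_le_floor (by linarith))).trans (Nat.floor_le (by positivity))

lemma floor_sub_add_one_mul_lt (hs : 0 < s) (hp : 0 < p) (hM : 1 < M) (hN : 0 < ⌊s / p - M⌋₊) :
    ((⌊s / p - M⌋₊ : ℝ) + 1) * (p / s) < 1 := by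
  have hNM : (⌊s / p - M⌋₊ : ℝ) ≤ s / p - M := Nat.floor_le (by linarith [Nat.floor_pos.1 hN])
  calc ((⌊s / p - M⌋₊ : ℝ) + 1) * (p / s) < s / p * (p / s) := by gcongr; linarith
    _ = 1 := by field_simp

lemma one_sub_floor_sub_mul_le (hs : 0 < s) (hp : 0 < p) :
    1 - ⌊s / p - M⌋₊ * (p / s) ≤ (M + 1) * p / s := by
  have hNM := Nat.lt_floor_add_one (s / p - M)
  calc 1 - ⌊s / p - M⌋₊ * (p / s) = (s / p - ⌊s / p - M⌋₊) * (p / s) := by field_simp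
    _ ≤ (M + 1) * (p / s) := by gcongr; linarith
    _ = (M + 1) * p / s := by ring

lemma one_sub_floor_sub_mul_rpow_le {γ : ℝ} (hs : 0 < s) (hp : 0 < p) (hM : 0 ≤ M) (hγ : 0 ≤ γ) :
    (1 - ⌊s / p - M⌋₊ * (p / s)) ^ γ ≤ ((M + 1) * p) ^ γ / s ^ γ := by
  have hN : (⌊s / p - M⌋₊ : ℝ) * (p / s) ≤ 1 :=
    calc (⌊s / p - M⌋₊ : ℝ) * (p / s) ≤ s / p * (p / s) := by
          gcongr; exact floor_sub_le_div hs hp hM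
      _ = 1 := by field_simp
  rw [← div_rpow (by positivity) hs.le]
  exact rpow_le_rpow (by linarith) (one_sub_floor_sub_mul_le hs hp) hγ

end Floor

theorem arctan_sum_to_integral_estimate
    (γ M : ℝ) (hγ : γ ∈ Set.Ioc (0:ℝ) 1) (hM : 2 ≤ M) :
    ∃ C : ℝ, 0 < C ∧ ∀ β : ℝ, 0 < β → ∀ lam : ℝ, 0 < lam →
      |(∑ k ∈ Finset.Icc 1 ⌊Real.sqrt lam / Real.pi - M⌋₊,
          (k : ℝ) * (lam - Real.pi ^ 2 * (k : ℝ) ^ 2) ^ (γ - 1)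
            * Real.arctan (Real.pi * k / β))
        - lam ^ γ / Real.pi ^ 2
            * ∫ x in (0:ℝ)..1,
                x * (1 - x ^ 2) ^ (γ - 1) * Real.arctan (x * Real.sqrt lam / β)|
      ≤ C * lam ^ (γ / 2) := by
  have hγ₀ := hγ.1
  refine ⟨((M + 1) * π) ^ γ / (2 * γ * π), by positivity, fun β hβ lam hlam ↦ ?_⟩
  obtain ⟨s, hs, rfl⟩ : ∃ s, 0 < s ∧ lam = s ^ 2 :=
    ⟨√lam, sqrt_pos.2 hlam, (sq_sqrt hlam.le).symm⟩
  have hriemann := abs_mul_sum_range_arctanIntegrand_sub_integral_le hγ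
    (by positivity : 0 ≤ s / β) (by positivity : 0 < π / s)
    (floor_sub_add_one_mul_lt (M := M) hs pi_pos (by linarith))
  rw [sqrt_sq hs.le, sum_sub_integral_eq_mul_riemannSum_sub_integral hs
    (floor_sub_le_div hs pi_pos (by linarith)), abs_mul, abs_of_nonneg (by positivity)]
  calc _ ≤ (s ^ 2) ^ γ / π ^ 2 * (π / (2 * γ) * (((M + 1) * π) ^ γ / s ^ γ)) := by
        gcongr
        exact hriemann.trans
          (by gcongr; exact one_sub_floor_sub_mul_rpow_le hs pi_pos (by linarith) hγ₀.le)
    _ = _ := by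
        rw [← rpow_pow_comm hs.le, sq, ← rpow_natCast_mul hs.le]
        push_cast
        field_simp
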